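/- arXiv:1111.0484 — 3 statements merged into one kernel-verified Lean document; each statement's English description precedes it below -/
import Mathlib

section
/- The characteristic polynomial of the 4×4 matrix H⁽⁴⁾(a) = [[2-27ia, -1, 0, 0], [-1, 2-ia, -1, 0], [0, -1, 2+ia, -1], [0, 0, -1, 2+27ia]] has real coefficients for every real a. -/
open Matrix Complex Polynomial

/-- H⁽⁴⁾(a): tridiagonal with diagonal (2-27ia, 2-ia, 2+ia, 2+27ia), off-diagonal -1. -/
noncomputable def H4 (a : ℝ) : Matrix (Fin 4) (Fin 4) ℂ :=
  !![2 - 27 * a * Complex.I, -1, 0, 0;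
     -1, 2 - a * Complex.I, -1, 0;
     0, -1, 2 + a * Complex.I, -1;
     0, 0, -1, 2 + 27 * a * Complex.I]

/-! Conjugating the entries of `H4 a` reverses its diagonal, i.e. amounts to a simultaneous
reversal of rows and columns. A permutation similarity does not change the characteristic
polynomial, so the characteristic polynomial equals its own conjugate. -/

theorem Matrix.charpoly_submatrix_equiv {n m R : Type*} [Fintype n] [DecidableEq n]
    [Fintype m] [DecidableEq m] [CommRing R] (A : Matrix n n R) (e : m ≃ n) :
    (A.submatrix e e).charpoly = A.charpoly :=
  A.charpoly_reindex e.symm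

theorem Matrix.star_charpoly_coeff_of_map_star_eq_submatrix {n R : Type*} [Fintype n]
    [DecidableEq n] [CommRing R] [StarRing R] (A : Matrix n n R) (σ : Equiv.Perm n)
    (hσ : A.map star = A.submatrix σ σ) (k : ℕ) :
    star (A.charpoly.coeff k) = A.charpoly.coeff k := by
  have hconj : A.charpoly.map (starRingEnd R) = A.charpoly := by
    rw [← charpoly_map, show A.map (starRingEnd R) = A.map star from rfl, hσ,
      charpoly_submatrix_equiv]
  simpa [starRingEnd_apply] using congrArg (coeff · k) hconj

theorem H4_map_conj (a : ℝ) :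
    (H4 a).map star = (H4 a).submatrix Fin.revPerm Fin.revPerm := by
  ext i j
  fin_cases i <;> fin_cases j <;> simp [H4, Complex.ext_iff]

theorem charpoly_H4_real_coeffs (a : ℝ) :
    ∀ n : ℕ, (((H4 a).charpoly).coeff n).im = 0 := fun n =>
  conj_eq_iff_im.mp ((H4 a).star_charpoly_coeff_of_map_star_eq_submatrix _ (H4_map_conj a) n)
end

section
/- The four eigenvalues of H⁽⁴⁾(a) = [[2-27ia, -1, 0, 0], [-1, 2-ia, -1, 0], [0, -1, 2+ia, -1], [0, 0, -1, 2+27ia]] are given by 2 ∓ (1/2)·√(6 - 1460a² ± 2√(529984a⁴ - 1680a² + 5)) for the four sign choices, whenever these expressions are well-defined. -/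
/-!
Shifting by `2`, the matrix `H4 a - 2` is tridiagonal with diagonal `(-27ia, -ia, ia, 27ia)`, so its
characteristic polynomial is even: in `μ = λ - 2` it is the biquadratic
`μ⁴ - (3 - 730a²) μ² + (1 - 675a² + 729a⁴)`. The numbers `x±` of the statement are the two roots of
the resolvent `t² - (3 - 730a²) t + (1 - 675a² + 729a⁴)`, whose discriminant is
`529984a⁴ - 1680a² + 5`; hence the factorization, and every `2 ± √x±` is a root of the
characteristic polynomial.
-/

open Matrix Complex Polynomial

theorem Polynomial.biquadratic_eq_mul {R : Type*} [CommRing R] (Y : R[X]) {p q s t : R}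
    (hsum : s + t = p) (hprod : s * t = q) :
    Y ^ 4 - C p * Y ^ 2 + C q = (Y ^ 2 - C s) * (Y ^ 2 - C t) := by
  subst hsum hprod
  simp only [map_add, map_mul]
  ring

theorem Polynomial.isRoot_sq_sub_C_sq_add {R : Type*} [CommRing R] (c d : R) :
    IsRoot ((X - C c) ^ 2 - C (d ^ 2)) (c + d) := by
  simp

theorem sign_mul_half_mul_sqrt_sq {ε E : ℝ} (hε : ε = 1 ∨ ε = -1) (hE : 0 ≤ E) :
    (ε * (1 / 2) * √E) ^ 2 = E / 4 := by
  have hε2 : ε ^ 2 = 1 := by rcases hε with rfl | rfl <;> norm_num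
  rw [mul_pow, mul_pow, hε2, Real.sq_sqrt hE]
  ring

theorem charpoly_H4 (a : ℝ) :
    (H4 a).charpoly = (X - C 2) ^ 4 - C (3 - 730 * (a : ℂ) ^ 2) * (X - C 2) ^ 2
      + C (1 - 675 * (a : ℂ) ^ 2 + 729 * (a : ℂ) ^ 4) := by
  have hI : (C I : ℂ[X]) ^ 2 = -1 := by rw [← C_pow, I_sq, C_neg, C_1]
  simp [Matrix.charpoly, det_succ_row_zero, Fin.sum_univ_succ, charmatrix_apply, H4,
    Fin.succAbove, C_ofNat]
  linear_combination (-730 * C (a : ℂ) ^ 2 * (X - 2) ^ 2 + 729 * C (a : ℂ) ^ 4 * (C I ^ 2 - 1)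
    + 675 * C (a : ℂ) ^ 2) * hI

theorem charpoly_H4_eq_mul (a : ℝ) (hdisc : 0 ≤ 529984 * a ^ 4 - 1680 * a ^ 2 + 5) :
    (H4 a).charpoly =
      ((X - C 2) ^ 2 - C (((6 - 1460 * a ^ 2 + 2 * √(529984 * a ^ 4 - 1680 * a ^ 2 + 5)) / 4 : ℝ) : ℂ)) *
        ((X - C 2) ^ 2 -
          C (((6 - 1460 * a ^ 2 - 2 * √(529984 * a ^ 4 - 1680 * a ^ 2 + 5)) / 4 : ℝ) : ℂ)) := by
  set r := √(529984 * a ^ 4 - 1680 * a ^ 2 + 5)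
  have hprod : (6 - 1460 * a ^ 2 + 2 * r) / 4 * ((6 - 1460 * a ^ 2 - 2 * r) / 4) =
      1 - 675 * a ^ 2 + 729 * a ^ 4 := by
    linear_combination (-1 / 4 : ℝ) * Real.sq_sqrt hdisc
  rw [charpoly_H4]
  apply biquadratic_eq_mul
  · push_cast
    ring
  · exact_mod_cast hprod

theorem eigenvalues_H4 (a : ℝ)
    (hdisc : 0 ≤ 529984 * a ^ 4 - 1680 * a ^ 2 + 5) :
    ((H4 a).charpoly =
        ((X - C 2) ^ 2 -
            C (((6 - 1460 * a ^ 2 + 2 * Real.sqrt (529984 * a ^ 4 - 1680 * a ^ 2 + 5)) / 4 : ℝ) : ℂ)) *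
        ((X - C 2) ^ 2 -
            C (((6 - 1460 * a ^ 2 - 2 * Real.sqrt (529984 * a ^ 4 - 1680 * a ^ 2 + 5)) / 4 : ℝ) : ℂ))) ∧
    (∀ ε₁ ε₂ : ℝ, (ε₁ = 1 ∨ ε₁ = -1) → (ε₂ = 1 ∨ ε₂ = -1) →
      0 ≤ 6 - 1460 * a ^ 2 + ε₂ * (2 * Real.sqrt (529984 * a ^ 4 - 1680 * a ^ 2 + 5)) →
      ((2 + ε₁ * ((1 : ℝ) / 2) *
          Real.sqrt (6 - 1460 * a ^ 2 + ε₂ * (2 * Real.sqrt (529984 * a ^ 4 - 1680 * a ^ 2 + 5))) : ℝ) : ℂ)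
        ∈ spectrum ℂ (H4 a)) := by
  refine ⟨charpoly_H4_eq_mul a hdisc, fun ε₁ ε₂ hε₁ hε₂ hE => mem_spectrum_of_isRoot_charpoly ?_⟩
  rw [charpoly_H4_eq_mul a hdisc, root_mul]
  have hroot := isRoot_sq_sub_C_sq_add (2 : ℂ)
    (ε₁ * (1 / 2) * √(6 - 1460 * a ^ 2 + ε₂ * (2 * √(529984 * a ^ 4 - 1680 * a ^ 2 + 5))) : ℝ)
  rw [← ofReal_pow, sign_mul_half_mul_sqrt_sq hε₁ hE] at hroot
  push_cast at hroot ⊢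
  rcases hε₂ with rfl | rfl
  · left
    simpa using hroot
  · right
    simpa [sub_eq_add_neg] using hroot
end

section
/- All eigenvalues of H⁽⁴⁾(a) are real if and only if |a| ≤ 1/2 - √69/18 (equivalently, a² ≤ (1/2 - √69/18)²), where H⁽⁴⁾(a) is the tridiagonal matrix with diagonal (2-27ia, 2-ia, 2+ia, 2+27ia) and off-diagonal -1. In particular the critical value α⁽⁴⁾ = 1/2 - √69/18 satisfies 0.0385 < α⁽⁴⁾ < 0.0386. -/
open Matrix Complex

/-!
Writing `x = 2 - z`, the characteristic polynomial of `H4 a` is the real biquadratic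
`x⁴ + (730a² - 3)x² + (729a⁴ - 675a² + 1)`, whose discriminant in `x²` is always positive.
Its roots `x` are all real iff both roots of the quadratic in `x²` are nonnegative, i.e. iff
`730a² ≤ 3` and `729a⁴ - 675a² + 1 ≥ 0`. The latter factors as
`729 (a² - α²)(a² - β²)` with `α² = (25 - 3√69)/54`, `β² = (25 + 3√69)/54`, and `α² < 3/730 < β²`.
-/

open scoped ComplexOrder

theorem quadratic_roots_nonneg_iff {c d : ℝ} (hdisc : 0 ≤ c ^ 2 - 4 * d) :
    (∀ t : ℂ, t ^ 2 + c * t + d = 0 → 0 ≤ t) ↔ c ≤ 0 ∧ 0 ≤ d := by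
  set r := √(c ^ 2 - 4 * d)
  have hr0 : 0 ≤ r := Real.sqrt_nonneg _
  have hr2 : r ^ 2 = c ^ 2 - 4 * d := Real.sq_sqrt hdisc
  have hfactor : ∀ t : ℂ,
      t ^ 2 + c * t + d = (t - ((-c + r) / 2 : ℝ)) * (t - ((-c - r) / 2 : ℝ)) := by
    intro t
    have hr2C : (r : ℂ) ^ 2 = c ^ 2 - 4 * d := by exact_mod_cast hr2
    push_cast
    linear_combination (1 / 4 : ℂ) * hr2C
  constructor
  · intro h
    have hsmall : 0 ≤ (-c - r) / 2 :=
      Complex.zero_le_real.mp (h _ (by rw [hfactor]; ring))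
    constructor <;> nlinarith
  · rintro ⟨hc, hd⟩ t ht
    have hr_le : r ≤ -c := by nlinarith
    rw [hfactor, mul_eq_zero, sub_eq_zero, sub_eq_zero] at ht
    rcases ht with rfl | rfl <;> exact Complex.zero_le_real.mpr (by linarith)

theorem biquadratic_roots_real_iff {c d : ℝ} (hdisc : 0 ≤ c ^ 2 - 4 * d) :
    (∀ x : ℂ, x ^ 4 + c * x ^ 2 + d = 0 → x.im = 0) ↔ c ≤ 0 ∧ 0 ≤ d := by
  rw [← quadratic_roots_nonneg_iff hdisc]
  constructor
  · intro h t ht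
    obtain ⟨x, rfl⟩ := IsAlgClosed.exists_pow_nat_eq t two_pos
    exact Complex.sq_nonneg_iff.mpr (h x (by linear_combination ht))
  · intro h x hx
    exact Complex.sq_nonneg_iff.mp (h (x ^ 2) (by linear_combination hx))

theorem H4_mem_spectrum_iff (a : ℝ) (z : ℂ) :
    z ∈ spectrum ℂ (H4 a) ↔
      (2 - z) ^ 4 + (730 * a ^ 2 - 3 : ℝ) * (2 - z) ^ 2 + (729 * a ^ 4 - 675 * a ^ 2 + 1 : ℝ)
        = 0 := by
  rw [spectrum.mem_iff, Matrix.isUnit_iff_isUnit_det, isUnit_iff_ne_zero, not_ne_iff]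
  have hM : algebraMap ℂ (Matrix (Fin 4) (Fin 4) ℂ) z - H4 a =
      !![z - (2 - 27 * a * I), 1, 0, 0;
         1, z - (2 - a * I), 1, 0;
         0, 1, z - (2 + a * I), 1;
         0, 0, 1, z - (2 + 27 * a * I)] := by
    ext i j
    fin_cases i <;> fin_cases j <;>
      simp [H4, Matrix.algebraMap_matrix_apply]
  rw [hM]
  simp [Matrix.det_succ_row_zero, Fin.sum_univ_succ,
    show Fin.succAbove (1 : Fin 4) (2 : Fin 3) = 3 from rfl]
  congr! 1
  ring_nf
  simp only [I_sq, I_pow_four]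
  ring

theorem H4_spectrum_real_iff (a : ℝ) :
    (∀ z ∈ spectrum ℂ (H4 a), z.im = 0) ↔
      730 * a ^ 2 - 3 ≤ 0 ∧ 0 ≤ 729 * a ^ 4 - 675 * a ^ 2 + 1 := by
  have hdisc : 0 ≤ (730 * a ^ 2 - 3) ^ 2 - 4 * (729 * a ^ 4 - 675 * a ^ 2 + 1) := by
    nlinarith [sq_nonneg (529984 * a ^ 2 - 840)]
  rw [← biquadratic_roots_real_iff hdisc]
  constructor
  · intro h x hx
    simpa using h (2 - x) ((H4_mem_spectrum_iff a _).mpr (by simpa using hx))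
  · intro h z hz
    simpa using h (2 - z) ((H4_mem_spectrum_iff a z).mp hz)

theorem H4_coefficient_conditions_iff (a : ℝ) :
    730 * a ^ 2 - 3 ≤ 0 ∧ 0 ≤ 729 * a ^ 4 - 675 * a ^ 2 + 1 ↔
      |a| ≤ 1 / 2 - √69 / 18 := by
  set s := √69
  have hs0 : 0 ≤ s := Real.sqrt_nonneg 69
  have hs2 : s ^ 2 = 69 := Real.sq_sqrt (by norm_num)
  have hα0 : 0 ≤ 1 / 2 - s / 18 := by nlinarith
  have hα2 : (1 / 2 - s / 18) ^ 2 = (25 - 3 * s) / 54 := by linear_combination hs2 / 324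
  have hfactor : 729 * a ^ 4 - 675 * a ^ 2 + 1 =
      729 * (a ^ 2 - (25 - 3 * s) / 54) * (a ^ 2 - (25 + 3 * s) / 54) := by
    linear_combination (9 / 4 : ℝ) * hs2
  rw [← abs_of_nonneg hα0, ← sq_le_sq, hα2, hfactor]
  constructor
  · rintro ⟨hc, hd⟩
    by_contra! h
    nlinarith [mul_pos (sub_pos.mpr h) (by nlinarith : 0 < (25 + 3 * s) / 54 - a ^ 2)]
  · intro h
    refine ⟨by nlinarith, ?_⟩
    nlinarith [mul_nonneg (sub_nonneg.mpr h) (by nlinarith : 0 ≤ (25 + 3 * s) / 54 - a ^ 2)]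

theorem critical_value_bounds :
    0.0385 < 1 / 2 - √69 / 18 ∧ 1 / 2 - √69 / 18 < (0.0386 : ℝ) := by
  have hlo : 8.3052 < √69 := Real.lt_sqrt_of_sq_lt (by norm_num)
  have hhi : √69 < 8.307 := (Real.sqrt_lt' (by norm_num)).mpr (by norm_num)
  constructor <;> linarith

theorem H4_real_spectrum_iff :
    (∀ a : ℝ,
      ((∀ z ∈ spectrum ℂ (H4 a), z.im = 0) ↔ |a| ≤ 1 / 2 - Real.sqrt 69 / 18)) ∧
    0.0385 < 1 / 2 - Real.sqrt 69 / 18 ∧ 1 / 2 - Real.sqrt 69 / 18 < 0.0386 :=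
  ⟨fun a => (H4_spectrum_real_iff a).trans (H4_coefficient_conditions_iff a),
    critical_value_bounds⟩
end
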